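/- Let (θ_n) be a sequence of probability measures on G such that Δ(m, θ_n) → 0 as n → ∞ for every probability measure m ≺ λ, and let φ be a probability measure on G with φ ≺ λ. Then Δ(m, φ * θ_n) → 0 as n → ∞ for every probability measure m ≺ λ. -/

import Mathlib

/-!
Since `g(φ * θ) = (gφ) * θ`, the triangle inequality through `θ` gives
`‖g(φ * θ) − φ * θ‖ ≤ ‖(gφ) * θ − θ‖ + ‖φ * θ − θ‖`, and by convexity of the total variation
`‖α * θ − θ‖ ≤ Δ(α, θ)` for every probability measure `α`. Integrating against `m` yields
`Δ(m, φ * θ) ≤ Δ(m * φ, θ) + Δ(φ, θ)`, and both `m * φ` and `φ` are absolutely continuous with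
respect to the left-invariant measure `λ`.
-/

open MeasureTheory Filter Topology

/-- Total variation norm `‖μ − ν‖` of the difference of two finite measures. -/
noncomputable def tv {α : Type*} [MeasurableSpace α] (μ ν : Measure α) : ℝ :=
  ((μ - ν) Set.univ + (ν - μ) Set.univ).toReal

/-- Pushforward `gμ` of a measure on `G` under the left translation `h ↦ g * h`. -/
noncomputable def ltrans {G : Type*} [MeasurableSpace G] [Mul G] (g : G) (μ : Measure G) :
    Measure G :=
  μ.map (fun h => g * h)

/-- Convolution `α * β` of measures on `G`: the pushforward of `α ⊗ β` under
`(g, h) ↦ g * h`. -/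
noncomputable def mconv {G : Type*} [MeasurableSpace G] [Mul G] (μ ν : Measure G) : Measure G :=
  (μ.prod ν).map (fun p : G × G => p.1 * p.2)

/-- `convPow θ k = θ^{*k}`, the `k`-th convolution power of `θ` (with `θ^{*0} = δ_1`). -/
noncomputable def convPow {G : Type*} [MeasurableSpace G] [Monoid G] (θ : Measure G) :
    ℕ → Measure G
  | 0 => Measure.dirac 1
  | (k + 1) => mconv θ (convPow θ k)

/-- Mean discrepancy `Δ(m, θ) = ∫_G ‖gθ − θ‖ dm(g)`. -/
noncomputable def disc {G : Type*} [MeasurableSpace G] [Mul G] (m θ : Measure G) : ℝ :=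
  ∫ g, tv (ltrans g θ) θ ∂m

open ProbabilityTheory MeasurableSpace Set
open scoped ENNReal

namespace ProbabilityTheory.Kernel

variable {α γ : Type*} {mα : MeasurableSpace α} {mγ : MeasurableSpace γ}
  [CountableOrCountablyGenerated α γ]

lemma measurable_sub (κ η : Kernel α γ) [IsFiniteKernel κ] [IsFiniteKernel η] :
    Measurable fun a => κ a - η a := by
  set ξ := κ + η
  -- Both kernels have densities with respect to `ξ` that are jointly measurable.
  have h_density (ρ : Kernel α γ) [IsFiniteKernel ρ] (hρ : ∀ a, ρ a ≤ ξ a) (a : α) :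
      ρ a = (ξ a).withDensity (rnDeriv ρ ξ a) := by
    rw [MeasureTheory.withDensity_congr_ae rnDeriv_eq_rnDeriv_measure,
      Measure.withDensity_rnDeriv_eq _ _ (Measure.absolutelyContinuous_of_le (hρ a))]
  have hκ := h_density κ fun a => (add_apply κ η a).symm ▸ Measure.le_add_right le_rfl
  have hη := h_density η fun a => (add_apply κ η a).symm ▸ Measure.le_add_left le_rfl
  refine Measure.measurable_of_measurable_coe _ fun s hs => ?_
  have h_eq (a : α) : (κ a - η a) s = ∫⁻ x in s, rnDeriv κ ξ a x - rnDeriv η ξ a x ∂ξ a := by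
    have : IsFiniteMeasure ((ξ a).withDensity (rnDeriv η ξ a)) := hη a ▸ inferInstance
    rw [hκ a, hη a, ← Measure.withDensity_sub (measurable_rnDeriv_right _ _ a)
      (measurable_rnDeriv_right _ _ a), MeasureTheory.withDensity_apply _ hs]
    rfl
  simp_rw [h_eq]
  exact Measurable.setLIntegral_kernel_prod_right (by fun_prop) hs

lemma measurable_sub_apply (κ η : Kernel α γ) [IsFiniteKernel κ] [IsFiniteKernel η] {s : Set γ}
    (hs : MeasurableSet s) : Measurable fun a => (κ a - η a) s :=
  (Measure.measurable_coe hs).comp (measurable_sub κ η)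

end ProbabilityTheory.Kernel

section TotalVariation

variable {α β : Type*} [MeasurableSpace α] [MeasurableSpace β]

lemma tv_nonneg (μ ν : Measure α) : 0 ≤ tv μ ν := ENNReal.toReal_nonneg

lemma tv_comm (μ ν : Measure α) : tv μ ν = tv ν μ := by
  rw [tv, tv, add_comm]

lemma sub_apply_univ_add_sub_apply_univ_le (μ ν : Measure α) :
    (μ - ν) univ + (ν - μ) univ ≤ μ univ + ν univ :=
  add_le_add (Measure.sub_le univ) (Measure.sub_le univ)

lemma tv_le_two (μ ν : Measure α) [IsProbabilityMeasure μ] [IsProbabilityMeasure ν] :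
    tv μ ν ≤ 2 := by
  have h := sub_apply_univ_add_sub_apply_univ_le μ ν
  rw [measure_univ (μ := μ), measure_univ (μ := ν), one_add_one_eq_two] at h
  exact (ENNReal.toReal_mono (by simp) h).trans_eq (by simp)

lemma sub_apply_univ_le_add (μ ν ρ : Measure α) [IsFiniteMeasure μ] [IsFiniteMeasure ν]
    [IsFiniteMeasure ρ] : (μ - ν) univ ≤ (μ - ρ) univ + (ρ - ν) univ := by
  have h : μ ≤ (μ - ρ) + (ρ - ν) + ν := calc
    μ ≤ (μ - ρ) + ρ := Measure.sub_le_iff_le_add.1 le_rfl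
    _ ≤ (μ - ρ) + ((ρ - ν) + ν) := by gcongr; exact Measure.sub_le_iff_le_add.1 le_rfl
    _ = (μ - ρ) + (ρ - ν) + ν := (add_assoc _ _ _).symm
  exact (Measure.sub_le_of_le_add h univ).trans_eq (Measure.add_apply _ _ _)

lemma tv_triangle (μ ν ρ : Measure α) [IsFiniteMeasure μ] [IsFiniteMeasure ν]
    [IsFiniteMeasure ρ] : tv μ ν ≤ tv μ ρ + tv ρ ν := by
  rw [tv, tv, tv, ← ENNReal.toReal_add (by finiteness) (by finiteness)]
  refine ENNReal.toReal_mono (by finiteness) ?_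
  calc (μ - ν) univ + (ν - μ) univ
      ≤ ((μ - ρ) univ + (ρ - ν) univ) + ((ν - ρ) univ + (ρ - μ) univ) :=
        add_le_add (sub_apply_univ_le_add μ ν ρ) (sub_apply_univ_le_add ν μ ρ)
    _ = ((μ - ρ) univ + (ρ - μ) univ) + ((ρ - ν) univ + (ν - ρ) univ) := by ring

variable [CountableOrCountablyGenerated β α]

lemma MeasureTheory.Measure.comp_sub_comp_le (μ : Measure β) (κ η : Kernel β α) [IsFiniteKernel κ]
    [IsFiniteKernel η] : κ ∘ₘ μ - η ∘ₘ μ ≤ (fun b => κ b - η b) ∘ₘ μ := by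
  refine Measure.sub_le_of_le_add (Measure.le_iff.2 fun s hs => ?_)
  rw [Measure.add_apply, Measure.bind_apply hs κ.aemeasurable,
    Measure.bind_apply hs (Kernel.measurable_sub κ η).aemeasurable,
    Measure.bind_apply hs η.aemeasurable, ← lintegral_add_left (Kernel.measurable_sub_apply κ η hs)]
  exact lintegral_mono fun b => Measure.sub_le_iff_le_add.1 le_rfl s

lemma tv_comp_le_integral (μ : Measure β) [IsFiniteMeasure μ] (κ η : Kernel β α)
    [IsMarkovKernel κ] [IsMarkovKernel η] :
    tv (κ ∘ₘ μ) (η ∘ₘ μ) ≤ ∫ b, tv (κ b) (η b) ∂μ := by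
  set f : β → ℝ≥0∞ := fun b => (κ b - η b) univ + (η b - κ b) univ
  have hf : Measurable f :=
    (Kernel.measurable_sub_apply κ η .univ).add (Kernel.measurable_sub_apply η κ .univ)
  have hf_le (b : β) : f b ≤ 2 := by
    simpa [one_add_one_eq_two] using sub_apply_univ_add_sub_apply_univ_le (κ b) (η b)
  have hf_lintegral : ∫⁻ b, f b ∂μ ≠ ∞ :=
    ne_top_of_le_ne_top (by simp [ENNReal.mul_eq_top]) (lintegral_mono hf_le)
  calc tv (κ ∘ₘ μ) (η ∘ₘ μ) ≤ (∫⁻ b, f b ∂μ).toReal := by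
        refine ENNReal.toReal_mono hf_lintegral ?_
        rw [lintegral_add_left (Kernel.measurable_sub_apply κ η .univ)]
        exact add_le_add
          ((Measure.comp_sub_comp_le μ κ η univ).trans_eq
            (Measure.bind_apply .univ (Kernel.measurable_sub κ η).aemeasurable))
          ((Measure.comp_sub_comp_le μ η κ univ).trans_eq
            (Measure.bind_apply .univ (Kernel.measurable_sub η κ).aemeasurable))
    _ = ∫ b, tv (κ b) (η b) ∂μ :=
        (integral_toReal hf.aemeasurable (ae_of_all _ fun b => (hf_le b).trans_lt (by simp))).symm

end TotalVariation

lemma disc_nonneg {G : Type*} [MeasurableSpace G] [Mul G] (m θ : Measure G) : 0 ≤ disc m θ :=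
  integral_nonneg fun _ => tv_nonneg _ _

section Convolution

variable {G : Type*} [MeasurableSpace G] [Monoid G] [MeasurableMul₂ G]

lemma ltrans_eq_dirac_mconv (g : G) (θ : Measure G) [SFinite θ] :
    ltrans g θ = Measure.dirac g ∗ₘ θ :=
  (Measure.dirac_mconv g θ).symm

lemma ltrans_mconv (g : G) (φ θ : Measure G) [IsFiniteMeasure φ] [IsFiniteMeasure θ] :
    ltrans g (φ ∗ₘ θ) = ltrans g φ ∗ₘ θ := by
  rw [ltrans_eq_dirac_mconv, ltrans_eq_dirac_mconv, Measure.mconv_assoc]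

lemma measurable_ltrans (θ : Measure G) [SFinite θ] : Measurable fun g => ltrans g θ :=
  Measure.measurable_of_measurable_coe _ fun s hs => by
    simp_rw [ltrans, Measure.map_apply (measurable_const_mul _) hs]
    exact measurable_measure_prodMk_left (measurable_mul hs)

instance (g : G) (θ : Measure G) [IsProbabilityMeasure θ] : IsProbabilityMeasure (ltrans g θ) :=
  Measure.isProbabilityMeasure_map (measurable_const_mul g).aemeasurable

noncomputable def ltransKernel (θ : Measure G) [SFinite θ] : Kernel G G :=
  ⟨fun g => ltrans g θ, measurable_ltrans θ⟩

lemma ltransKernel_apply (θ : Measure G) [SFinite θ] (g : G) : ltransKernel θ g = ltrans g θ :=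
  rfl

instance (θ : Measure G) [IsProbabilityMeasure θ] : IsMarkovKernel (ltransKernel θ) :=
  ⟨fun g => by rw [ltransKernel_apply]; infer_instance⟩

lemma ltransKernel_comp (μ θ : Measure G) [SFinite θ] : ltransKernel θ ∘ₘ μ = μ ∗ₘ θ := by
  ext s hs
  rw [Measure.bind_apply hs (Kernel.aemeasurable _), Measure.mconv,
    Measure.map_apply measurable_mul hs, Measure.prod_apply (measurable_mul hs)]
  exact lintegral_congr fun g => Measure.map_apply (measurable_const_mul g) hs

variable [CountablyGenerated G]

lemma measurable_tv_ltrans (θ : Measure G) [IsProbabilityMeasure θ] :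
    Measurable fun g => tv (ltrans g θ) θ :=
  ENNReal.measurable_toReal.comp
    ((Kernel.measurable_sub_apply (ltransKernel θ) (Kernel.const G θ) .univ).add
      (Kernel.measurable_sub_apply (Kernel.const G θ) (ltransKernel θ) .univ))

lemma integrable_tv_ltrans (μ θ : Measure G) [IsFiniteMeasure μ] [IsProbabilityMeasure θ] :
    Integrable (fun g => tv (ltrans g θ) θ) μ :=
  Integrable.of_bound (measurable_tv_ltrans θ).aestronglyMeasurable 2 <| ae_of_all _ fun _ => by
    rw [Real.norm_of_nonneg (tv_nonneg _ _)]
    exact tv_le_two _ _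

lemma disc_ltrans (g : G) (φ θ : Measure G) [IsProbabilityMeasure θ] :
    disc (ltrans g φ) θ = ∫ h, tv (ltrans (g * h) θ) θ ∂φ := by
  rw [disc, ltrans, integral_map (measurable_const_mul g).aemeasurable
    (measurable_tv_ltrans θ).aestronglyMeasurable]

lemma tv_mconv_le_disc (α θ : Measure G) [IsProbabilityMeasure α] [IsProbabilityMeasure θ] :
    tv (α ∗ₘ θ) θ ≤ disc α θ := by
  simpa [disc, ltransKernel_comp, ltransKernel_apply] using
    tv_comp_le_integral α (ltransKernel θ) (Kernel.const G θ)

lemma disc_mconv (m φ θ : Measure G) [IsFiniteMeasure m] [IsFiniteMeasure φ]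
    [IsProbabilityMeasure θ] : disc (m ∗ₘ φ) θ = ∫ g, disc (ltrans g φ) θ ∂m := by
  simp_rw [disc_ltrans]
  exact integral_mconv (integrable_tv_ltrans _ θ)

lemma integrable_disc_ltrans (m φ θ : Measure G) [IsFiniteMeasure m] [IsFiniteMeasure φ]
    [IsProbabilityMeasure θ] :
    Integrable (fun g => disc (ltrans g φ) θ) m := by
  have h := integrable_tv_ltrans (m ∗ₘ φ) θ
  simp_rw [disc_ltrans]
  simpa [Real.norm_of_nonneg (tv_nonneg _ _)] using ((integrable_mconv_iff h.1).1 h).2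

lemma disc_mconv_le (m φ θ : Measure G) [IsProbabilityMeasure m] [IsProbabilityMeasure φ]
    [IsProbabilityMeasure θ] : disc m (φ ∗ₘ θ) ≤ disc (m ∗ₘ φ) θ + disc φ θ := by
  have h_pt (g : G) : tv (ltrans g (φ ∗ₘ θ)) (φ ∗ₘ θ) ≤ disc (ltrans g φ) θ + disc φ θ := by
    rw [ltrans_mconv]
    calc _ ≤ tv (ltrans g φ ∗ₘ θ) θ + tv θ (φ ∗ₘ θ) := tv_triangle _ _ _
      _ ≤ _ := add_le_add (tv_mconv_le_disc _ _)
          ((tv_comm θ (φ ∗ₘ θ)).trans_le (tv_mconv_le_disc φ θ))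
  have h_int := integrable_disc_ltrans m φ θ
  calc disc m (φ ∗ₘ θ) ≤ ∫ g, (disc (ltrans g φ) θ + disc φ θ) ∂m :=
        integral_mono_of_nonneg (ae_of_all _ fun _ => tv_nonneg _ _)
          (h_int.add (integrable_const _)) (ae_of_all _ h_pt)
    _ = disc (m ∗ₘ φ) θ + disc φ θ := by
        rw [integral_add h_int (integrable_const _), integral_const, disc_mconv]
        simp

end Convolution

theorem stmt3_general {G : Type*} [TopologicalSpace G] [Group G] [IsTopologicalGroup G]
    [SecondCountableTopology G] [MeasurableSpace G] [BorelSpace G]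
    (lam : Measure G) (hlam : lam.IsHaarMeasure)
    (θ : ℕ → Measure G) (hθ : ∀ n, IsProbabilityMeasure (θ n))
    (hISAI : ∀ m : Measure G, IsProbabilityMeasure m → m ≪ lam →
      Tendsto (fun n => disc m (θ n)) atTop (nhds 0))
    (φ : Measure G) (hφ : IsProbabilityMeasure φ) (hφac : φ ≪ lam) :
    ∀ m : Measure G, IsProbabilityMeasure m → m ≪ lam →
      Tendsto (fun n => disc m (mconv φ (θ n))) atTop (nhds 0) := by
  intro m hm _
  have hmφ : m ∗ₘ φ ≪ lam := Measure.mconv_absolutelyContinuous hφac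
  have h_bound := (hISAI _ inferInstance hmφ).add (hISAI φ hφ hφac)
  rw [add_zero] at h_bound
  refine squeeze_zero (fun n => disc_nonneg _ _) (fun n => ?_) h_bound
  have := hθ n
  exact disc_mconv_le m φ (θ n)

/-- If `(θ_n)` are probability measures with `Δ(m, θ_n) → 0` for every
probability measure `m ≺ λ`, and `φ` is a probability measure with `φ ≺ λ`, then
`Δ(m, φ * θ_n) → 0` for every probability measure `m ≺ λ`. -/
theorem stmt3 {G : Type*} [TopologicalSpace G] [Group G] [IsTopologicalGroup G]
    [LocallyCompactSpace G] [SecondCountableTopology G] [MeasurableSpace G] [BorelSpace G]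
    (lam : Measure G) (hlam : lam.IsHaarMeasure)
    (θ : ℕ → Measure G) (hθ : ∀ n, IsProbabilityMeasure (θ n))
    (hISAI : ∀ m : Measure G, IsProbabilityMeasure m → m ≪ lam →
      Tendsto (fun n => disc m (θ n)) atTop (nhds 0))
    (φ : Measure G) (hφ : IsProbabilityMeasure φ) (hφac : φ ≪ lam) :
    ∀ m : Measure G, IsProbabilityMeasure m → m ≪ lam →
      Tendsto (fun n => disc m (mconv φ (θ n))) atTop (nhds 0) :=
  stmt3_general lam hlam θ hθ hISAI φ hφ hφac
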